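/- Let G be a connected 2-color graph with edges colored black (b) and white (w), and let G_b (respectively G_w) be the spanning subgraph of G on all vertices of G with only the black (respectively white) edges. Then p0(G_b) + p1(G_b) + p0(G_w) + p1(G_w) ≤ |E(G)| + 2, and equality holds if and only if G has no 2-colored cycle, i.e., every cycle of G consists entirely of black edges or entirely of white edges. -/

import Mathlib

open scoped Classical

noncomputable section

structure Multigraph where
  V : Type
  E : Type
  [fintypeV : Fintype V]
  [fintypeE : Fintype E]
  ends : E → Sym2 V

attribute [instance] Multigraph.fintypeV Multigraph.fintypeE

namespace Multigraph

/-- The simple graph underlying a multigraph (loops and multiplicities dropped);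
it has the same connectivity properties as the multigraph. -/
def toSimpleGraph (G : Multigraph) : SimpleGraph G.V where
  Adj v w := v ≠ w ∧ ∃ e : G.E, G.ends e = s(v, w)
  symm := ⟨by
    rintro v w ⟨hne, e, he⟩
    exact ⟨hne.symm, e, by rw [he]; exact Sym2.eq_swap⟩⟩
  loopless := ⟨fun v h => h.1 rfl⟩

/-- `p0 G` is the number of connected components of `G`. -/
def p0 (G : Multigraph) : ℕ := Nat.card G.toSimpleGraph.ConnectedComponent

/-- The number of vertices of `G`. -/
def numV (G : Multigraph) : ℕ := Fintype.card G.V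

/-- The number of edges of `G`. -/
def numE (G : Multigraph) : ℕ := Fintype.card G.E

/-- `p1 G = |E| - |V| + p0 G` is the cyclomatic number of `G`. -/
def p1 (G : Multigraph) : ℕ := G.numE + G.p0 - G.numV

/-- A multigraph is connected if it has exactly one connected component. -/
def Connected (G : Multigraph) : Prop := G.p0 = 1

/-- A loop is an edge whose two endpoints coincide. -/
def IsLoop (G : Multigraph) (e : G.E) : Prop := (G.ends e).IsDiag

/-- The spanning subgraph of `G` with edge set `S`. -/
def spanning (G : Multigraph) (S : Set G.E) : Multigraph where
  V := G.V
  E := ↥S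
  ends := fun e => G.ends e.1

/-- `G` with the edge `e` deleted. -/
def deleteEdge (G : Multigraph) (e : G.E) : Multigraph where
  V := G.V
  E := {f : G.E // f ≠ e}
  ends := fun f => G.ends f.1

/-- An isthmus is an edge whose deletion increases the number of components. -/
def IsIsthmus (G : Multigraph) (e : G.E) : Prop := G.p0 < (G.deleteEdge e).p0

/-- The setoid on vertices identifying the two endpoints of `e`. -/
def contractSetoid (G : Multigraph) (e : G.E) : Setoid G.V :=
  Relation.EqvGen.setoid fun v w => G.ends e = s(v, w)

/-- `G` with the edge `e` contracted: `e` is deleted and its endpoints identified. -/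
def contractEdge (G : Multigraph) (e : G.E) : Multigraph where
  V := Quotient (G.contractSetoid e)
  E := {f : G.E // f ≠ e}
  ends := fun f => (G.ends f.1).map (Quotient.mk (G.contractSetoid e))

/-- The rank `r(S) = |V(G)| - p0(V(G), S)` of a set of edges. -/
def rank (G : Multigraph) (S : Set G.E) : ℕ := G.numV - (G.spanning S).p0

/-- The Tutte polynomial (Whitney rank generating function)
`χ(G; x, y) = ∑_{S ⊆ E} (x-1)^(r(E)-r(S)) (y-1)^(|S|-r(S))`, as an element of
`ℤ[x][y]` (so `x = Polynomial.C Polynomial.X` and `y = Polynomial.X`). -/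
def tutte (G : Multigraph) : Polynomial (Polynomial ℤ) :=
  ∑ S : Finset G.E,
    Polynomial.C (Polynomial.X - 1) ^ (G.rank Set.univ - G.rank ↑S) *
      (Polynomial.X - Polynomial.C 1) ^ (S.card - G.rank ↑S)

/-- `tutteCoeff G i j` is the coefficient `v_{i,j}` of `x^i y^j` in the Tutte polynomial. -/
def tutteCoeff (G : Multigraph) (i j : ℕ) : ℤ := (G.tutte.coeff j).coeff i

/-- Evaluation of the Tutte polynomial at `x`, `y` in a commutative ring. -/
def tutteEval {K : Type} [CommRing K] (G : Multigraph) (x y : K) : K :=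
  Polynomial.eval₂ (Polynomial.eval₂RingHom (Int.castRingHom K) x) y G.tutte

/-- An isomorphism of multigraphs. -/
structure Iso (G H : Multigraph) where
  vEquiv : G.V ≃ H.V
  eEquiv : G.E ≃ H.E
  ends_eq : ∀ e : G.E, H.ends (eEquiv e) = (G.ends e).map vEquiv

/-- The disjoint union of two multigraphs. -/
def disjUnion (G H : Multigraph) : Multigraph where
  V := G.V ⊕ H.V
  E := G.E ⊕ H.E
  ends := fun e =>
    Sum.elim (fun e => (G.ends e).map Sum.inl) (fun e => (H.ends e).map Sum.inr) e

def joinSetoid (G H : Multigraph) (v : G.V) (w : H.V) : Setoid (G.V ⊕ H.V) :=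
  Relation.EqvGen.setoid fun a b => a = Sum.inl v ∧ b = Sum.inr w

/-- The one-vertex join `G * H`, identifying the vertex `v` of `G` with the vertex `w` of `H`. -/
def join (G H : Multigraph) (v : G.V) (w : H.V) : Multigraph where
  V := Quotient (G.joinSetoid H v w)
  E := G.E ⊕ H.E
  ends := fun e =>
    Sum.elim
      (fun e => (G.ends e).map fun a => Quotient.mk (G.joinSetoid H v w) (Sum.inl a))
      (fun e => (H.ends e).map fun a => Quotient.mk (G.joinSetoid H v w) (Sum.inr a)) e

/-- A multigraph consisting of a single loop on a single vertex. -/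
def IsSingleLoop (G : Multigraph) : Prop :=
  Fintype.card G.V = 1 ∧ Fintype.card G.E = 1 ∧ ∀ e : G.E, G.IsLoop e

/-- `G` can be expressed as a one-vertex join `G₁ * G₂` in which each factor has
more than one vertex or is a single loop. -/
def IsJoinDecomposable (G : Multigraph) : Prop :=
  ∃ (G₁ G₂ : Multigraph) (v₁ : G₁.V) (v₂ : G₂.V),
    Nonempty (Iso G (join G₁ G₂ v₁ v₂)) ∧
    (1 < Fintype.card G₁.V ∨ G₁.IsSingleLoop) ∧
    (1 < Fintype.card G₂.V ∨ G₂.IsSingleLoop)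

/-- A multigraph is 2-connected if it is connected and admits no one-vertex join
decomposition (equivalently, it is connected with no cut vertex). -/
def TwoConnected (G : Multigraph) : Prop := G.Connected ∧ ¬G.IsJoinDecomposable

end Multigraph
end

namespace Multigraph

/-- A cycle of length `n` in a multigraph: distinct vertices `v 0, …, v (n-1)` and
distinct edges `e 0, …, e (n-1)` such that the edge `e i` joins the vertices `v i`
and `v (i+1)` (indices mod `n`). -/
structure CycleIn (G : Multigraph) (n : ℕ) where
  vtx : ZMod n → G.V
  edge : ZMod n → G.E
  vtx_inj : Function.Injective vtx
  edge_inj : Function.Injective edge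
  ends_eq : ∀ i : ZMod n, G.ends (edge i) = s(vtx i, vtx (i + 1))

/-- Every cycle of `G` is monochromatic with respect to the edge 2-coloring `c`
(`true` = black, `false` = white), i.e. `G` has no 2-colored cycle. -/
def MonochromaticCycles (G : Multigraph) (c : G.E → Bool) : Prop :=
  ∀ (n : ℕ) (C : CycleIn G n) (i j : ZMod n), c (C.edge i) = c (C.edge j)

end Multigraph

namespace Multigraph


end Multigraph


namespace TwoColorAux

/-- identification counting lemma -/
lemma card_aux {X Y : Type} [Finite X] (f : X → Y) (a b : X) (hab : a ≠ b)
    (hfab : f a = f b) (hsurj : Function.Surjective f)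
    (hinj : ∀ x y, f x = f y → x = y ∨ (x = a ∧ y = b) ∨ (x = b ∧ y = a)) :
    Nat.card Y + 1 = Nat.card X := by
  have hg : Function.Bijective (fun x : {x : X // x ≠ b} => f x.1) := by
    constructor
    · rintro ⟨x, hx⟩ ⟨y, hy⟩ hxy
      rcases hinj x y hxy with h | ⟨h1, h2⟩ | ⟨h1, h2⟩
      · exact Subtype.ext h
      · exact absurd h2 hy
      · exact absurd h1 hx
    · intro y
      obtain ⟨x, hx⟩ := hsurj y
      by_cases hxb : x = b
      · refine ⟨⟨a, hab⟩, ?_⟩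
        show f a = y
        rw [hfab, ← hxb, hx]
      · exact ⟨⟨x, hxb⟩, hx⟩
  have h1 : Nat.card {x : X // x ≠ b} = Nat.card Y := Nat.card_eq_of_bijective _ hg
  have := Fintype.ofFinite X
  rw [← h1, Nat.card_eq_fintype_card, Nat.card_eq_fintype_card]
  have h2 : Fintype.card {x : X // ¬ x = b} = Fintype.card X - Fintype.card {x : X // x = b} :=
    Fintype.card_subtype_compl _
  have h3 : Fintype.card {x : X // x = b} = 1 := Fintype.card_subtype_eq b
  have h4 : 0 < Fintype.card X := Fintype.card_pos_iff.mpr ⟨b⟩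
  have : Fintype.card {x : X // x ≠ b} = Fintype.card {x : X // ¬ x = b} := rfl
  omega

variable {V : Type}

/-- `H` with an extra edge joining `u` and `v`. -/
def addE (H : SimpleGraph V) (u v : V) : SimpleGraph V where
  Adj x y := H.Adj x y ∨ (x ≠ y ∧ (s(x, y) : Sym2 V) = s(u, v))
  symm := ⟨by
    rintro x y (h | ⟨h1, h2⟩)
    · exact Or.inl h.symm
    · exact Or.inr ⟨h1.symm, by rw [Sym2.eq_swap]; exact h2⟩⟩
  loopless := ⟨by rintro x (h | ⟨h1, _⟩); exact H.irrefl h; exact h1 rfl⟩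

lemma le_addE (H : SimpleGraph V) (u v : V) : H ≤ addE H u v := fun _ _ h => Or.inl h

lemma addE_reachable (H : SimpleGraph V) {u v : V} {x y : V}
    (h : (addE H u v).Reachable x y) :
    H.Reachable x y ∨ (H.Reachable x u ∧ H.Reachable v y) ∨
      (H.Reachable x v ∧ H.Reachable u y) := by
  obtain ⟨w⟩ := h
  induction w with
  | nil => exact Or.inl (SimpleGraph.Reachable.refl _)
  | @cons x z y hadj w ih =>
    rcases hadj with h | ⟨hne, hs⟩
    · have hxz : H.Reachable x z := h.reachable
      rcases ih with h' | ⟨h1, h2⟩ | ⟨h1, h2⟩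
      · exact Or.inl (hxz.trans h')
      · exact Or.inr (Or.inl ⟨hxz.trans h1, h2⟩)
      · exact Or.inr (Or.inr ⟨hxz.trans h1, h2⟩)
    · rw [Sym2.eq_iff] at hs
      rcases hs with ⟨hxu, hzv⟩ | ⟨hxv, hzu⟩
      · subst hxu; subst hzv
        rcases ih with h' | ⟨h1, h2⟩ | ⟨h1, h2⟩
        · exact Or.inr (Or.inl ⟨SimpleGraph.Reachable.refl _, h'⟩)
        · first
          | exact Or.inl (h1.symm.trans h2)
          | exact Or.inl h2
        · first
          | exact Or.inl (h1.symm.trans h2)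
          | exact Or.inl h2
      · subst hxv; subst hzu
        rcases ih with h' | ⟨h1, h2⟩ | ⟨h1, h2⟩
        · exact Or.inr (Or.inr ⟨SimpleGraph.Reachable.refl _, h'⟩)
        · first
          | exact Or.inl (h1.symm.trans h2)
          | exact Or.inl h2
        · first
          | exact Or.inl (h1.symm.trans h2)
          | exact Or.inl h2

lemma addE_reachable_iff (H : SimpleGraph V) {u v : V} (huv : H.Reachable u v) {x y : V} :
    (addE H u v).Reachable x y ↔ H.Reachable x y := by
  constructor
  · intro h
    rcases addE_reachable H h with h' | ⟨h1, h2⟩ | ⟨h1, h2⟩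
    · exact h'
    · exact (h1.trans huv).trans h2
    · exact (h1.trans huv.symm).trans h2
  · exact fun h => h.mono (le_addE H u v)

lemma card_cc_addE_eq [Finite V] (H : SimpleGraph V) {u v : V} (huv : H.Reachable u v) :
    Nat.card (addE H u v).ConnectedComponent = Nat.card H.ConnectedComponent := by
  refine (Nat.card_eq_of_bijective
    (SimpleGraph.ConnectedComponent.map (SimpleGraph.Hom.ofLE (le_addE H u v)))
    ⟨?_, ?_⟩).symm
  · intro c d
    refine SimpleGraph.ConnectedComponent.ind₂ (fun x y h => ?_) c d
    have : (addE H u v).Reachable x y := by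
      simpa using SimpleGraph.ConnectedComponent.eq.mp h
    exact SimpleGraph.ConnectedComponent.eq.mpr ((addE_reachable_iff H huv).mp this)
  · intro c
    refine SimpleGraph.ConnectedComponent.ind (fun x => ?_) c
    exact ⟨H.connectedComponentMk x, rfl⟩

lemma card_cc_addE_lt [Finite V] (H : SimpleGraph V) {u v : V} (huv : ¬ H.Reachable u v) :
    Nat.card (addE H u v).ConnectedComponent + 1 = Nat.card H.ConnectedComponent := by
  have hne : u ≠ v := by rintro rfl; exact huv (SimpleGraph.Reachable.refl _)
  refine card_aux
    (SimpleGraph.ConnectedComponent.map (SimpleGraph.Hom.ofLE (le_addE H u v)))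
    (H.connectedComponentMk u) (H.connectedComponentMk v) ?_ ?_ ?_ ?_
  · intro h; exact huv (SimpleGraph.ConnectedComponent.eq.mp h)
  · refine SimpleGraph.ConnectedComponent.eq.mpr ?_
    exact SimpleGraph.Adj.reachable (Or.inr ⟨hne, rfl⟩)
  · intro c
    refine SimpleGraph.ConnectedComponent.ind (fun x => ?_) c
    exact ⟨H.connectedComponentMk x, rfl⟩
  · intro c d
    refine SimpleGraph.ConnectedComponent.ind₂ (fun x y h => ?_) c d
    have : (addE H u v).Reachable x y := by
      simpa using SimpleGraph.ConnectedComponent.eq.mp h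
    rcases addE_reachable H this with h' | ⟨h1, h2⟩ | ⟨h1, h2⟩
    · exact Or.inl (SimpleGraph.ConnectedComponent.eq.mpr h')
    · exact Or.inr (Or.inl ⟨SimpleGraph.ConnectedComponent.eq.mpr h1,
        SimpleGraph.ConnectedComponent.eq.mpr h2.symm⟩)
    · exact Or.inr (Or.inr ⟨SimpleGraph.ConnectedComponent.eq.mpr h1,
        SimpleGraph.ConnectedComponent.eq.mpr h2.symm⟩)

lemma card_cc_bot (V : Type) [Finite V] :
    Nat.card (⊥ : SimpleGraph V).ConnectedComponent = Nat.card V := by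
  refine (Nat.card_eq_of_bijective (⊥ : SimpleGraph V).connectedComponentMk ⟨?_, ?_⟩).symm
  · intro x y h
    exact SimpleGraph.reachable_bot.mp (SimpleGraph.ConnectedComponent.eq.mp h)
  · intro c; exact SimpleGraph.ConnectedComponent.ind (fun x => ⟨x, rfl⟩) c

end TwoColorAux

namespace Multigraph

open TwoColorAux

variable (G : Multigraph)

/-- Reachability inside the spanning subgraph with edge set `S`. -/
noncomputable def Rch (S : Finset G.E) (u v : G.V) : Prop :=
  ((G.spanning (↑S : Set G.E)).toSimpleGraph).Reachable u v

/-- Number of components of the spanning subgraph with edge set `S`. -/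
noncomputable def cN (S : Finset G.E) : ℕ := (G.spanning (↑S : Set G.E)).p0

variable {G}

lemma exists_ends (e : G.E) : ∃ u v : G.V, G.ends e = s(u, v) := by
  obtain ⟨⟨u, v⟩, h⟩ := Quot.exists_rep (G.ends e)
  exact ⟨u, v, h.symm⟩

lemma rch_refl (S : Finset G.E) (u : G.V) : G.Rch S u u := SimpleGraph.Reachable.refl _

lemma rch_mono {S T : Finset G.E} (hST : S ⊆ T) {u v : G.V} (h : G.Rch S u v) :
    G.Rch T u v := by
  refine SimpleGraph.Reachable.mono (fun x y hxy => ?_) h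
  obtain ⟨hne, f, hf⟩ := hxy
  exact ⟨hne, ⟨f.1, by simpa using hST (by simpa using f.2)⟩, hf⟩

lemma spanning_insert_eq (S : Finset G.E) (e : G.E) {u v : G.V} (h : G.ends e = s(u, v)) :
    (G.spanning (↑(insert e S) : Set G.E)).toSimpleGraph =
      TwoColorAux.addE (G.spanning (↑S : Set G.E)).toSimpleGraph u v := by
  ext x y
  constructor
  · rintro ⟨hne, f, hf⟩
    have hmem : f.1 ∈ insert e S := by simpa using f.2
    rcases Finset.mem_insert.mp hmem with heq | hfS
    · refine Or.inr ⟨hne, ?_⟩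
      have h1 : G.ends f.1 = s(x, y) := hf
      have h2 : G.ends e = s(x, y) := heq ▸ h1
      exact h2.symm.trans h
    · exact Or.inl ⟨hne, ⟨f.1, by simpa using hfS⟩, hf⟩
  · rintro (⟨hne, f, hf⟩ | ⟨hne, hs⟩)
    · refine ⟨hne, ⟨f.1, ?_⟩, hf⟩
      simp only [Finset.coe_insert, Set.mem_insert_iff]
      exact Or.inr (by simpa using f.2)
    · refine ⟨hne, ⟨e, by simp⟩, ?_⟩
      show G.ends e = s(x, y)
      rw [h]; exact hs.symm

lemma cN_insert_of_rch {S : Finset G.E} {e : G.E} {u v : G.V} (h : G.ends e = s(u, v))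
    (hr : G.Rch S u v) : G.cN (insert e S) = G.cN S := by
  have := Fintype.finite G.fintypeV
  unfold cN p0
  rw [spanning_insert_eq S e h]
  exact card_cc_addE_eq _ hr

lemma cN_insert_of_not_rch {S : Finset G.E} {e : G.E} {u v : G.V} (h : G.ends e = s(u, v))
    (hr : ¬ G.Rch S u v) : G.cN (insert e S) + 1 = G.cN S := by
  have := Fintype.finite G.fintypeV
  unfold cN p0
  rw [spanning_insert_eq S e h]
  exact card_cc_addE_lt _ hr

lemma cN_insert_le (S : Finset G.E) (e : G.E) : G.cN (insert e S) ≤ G.cN S := by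
  obtain ⟨u, v, h⟩ := exists_ends e
  by_cases hr : G.Rch S u v
  · exact (cN_insert_of_rch h hr).le
  · have := cN_insert_of_not_rch h hr
    omega

lemma cN_le_insert_add_one (S : Finset G.E) (e : G.E) : G.cN S ≤ G.cN (insert e S) + 1 := by
  obtain ⟨u, v, h⟩ := exists_ends e
  by_cases hr : G.Rch S u v
  · rw [cN_insert_of_rch h hr]; omega
  · rw [← cN_insert_of_not_rch h hr]

lemma cN_empty : G.cN (∅ : Finset G.E) = G.numV := by
  have := Fintype.finite G.fintypeV
  unfold cN p0
  have hbot : (G.spanning (↑(∅ : Finset G.E) : Set G.E)).toSimpleGraph = ⊥ := by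
    ext x y
    constructor
    · rintro ⟨hne, f, hf⟩
      exact absurd f.2 (by simp)
    · intro h; exact absurd h (by simp)
  rw [hbot, card_cc_bot, numV, Nat.card_eq_fintype_card]
  exact Fintype.card_congr' rfl

end Multigraph
namespace Multigraph

variable {G : Multigraph}

lemma numV_le_card_add_cN (S : Finset G.E) : G.numV ≤ S.card + G.cN S := by
  induction S using Finset.induction_on with
  | empty => simp [cN_empty]
  | @insert e S he ih =>
    have h1 := cN_le_insert_add_one (G := G) S e
    rw [Finset.card_insert_of_notMem he]
    omega

lemma cN_Dstep (S T : Finset G.E) (e : G.E) :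
    G.cN (S ∪ T) + G.cN (insert e T) ≤ G.cN (insert e (S ∪ T)) + G.cN T := by
  obtain ⟨u, v, h⟩ := exists_ends e
  by_cases hr : G.Rch T u v
  · rw [cN_insert_of_rch h hr, cN_insert_of_rch h (rch_mono Finset.subset_union_right hr)]
  · rw [← cN_insert_of_not_rch h hr]
    have := cN_le_insert_add_one (G := G) (S ∪ T) e
    omega

lemma cN_Dmono (S T U : Finset G.E) :
    G.cN (S ∪ T) + G.cN (T ∪ U) ≤ G.cN (S ∪ T ∪ U) + G.cN T := by
  induction U using Finset.induction_on with
  | empty => simp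
  | @insert a U ha ih =>
    have h1 := cN_Dstep S (T ∪ U) a
    have e1 : insert a (T ∪ U) = T ∪ insert a U := by ext x; simp
    have e2 : insert a (S ∪ (T ∪ U)) = S ∪ T ∪ insert a U := by ext x; simp
    have e3 : S ∪ (T ∪ U) = S ∪ T ∪ U := by ext x; simp
    rw [e1, e2, e3] at h1
    omega

lemma cN_add_le (S T : Finset G.E) :
    G.cN S + G.cN T ≤ G.numV + G.cN (S ∪ T) := by
  have h := cN_Dmono S (∅ : Finset G.E) T
  simp only [Finset.union_empty, Finset.empty_union] at h
  rw [cN_empty] at h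
  omega

end Multigraph
namespace Multigraph

variable {G : Multigraph}

lemma zmod_natCast_val {n : ℕ} [NeZero n] (i : ZMod n) : ((i.val : ℕ) : ZMod n) = i :=
  ZMod.natCast_rightInverse i

lemma zmod_val_eq_iff {n : ℕ} [NeZero n] {i j : ZMod n} : i.val = j.val ↔ i = j :=
  ⟨fun h => ZMod.val_injective n h, fun h => h ▸ rfl⟩

lemma zmod_val_add_one {n : ℕ} [NeZero n] {i : ZMod n} (h : i.val + 1 < n) :
    (i + 1).val = i.val + 1 := by
  conv_lhs => rw [← zmod_natCast_val i]
  rw [← Nat.cast_one, ← Nat.cast_add, ZMod.val_natCast, Nat.mod_eq_of_lt h]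

lemma zmod_neg_one_val {n : ℕ} [NeZero n] (hn : 2 ≤ n) : (-1 : ZMod n).val = n - 1 := by
  have h0 : ((n - 1 : ℕ) : ZMod n) + 1 = 0 := by
    have h2 : (((n - 1) + 1 : ℕ) : ZMod n) = 0 := by
      rw [(by omega : n - 1 + 1 = n), ZMod.natCast_self]
    push_cast at h2
    exact h2
  have h1 : ((n - 1 : ℕ) : ZMod n) = -1 := eq_neg_of_add_eq_zero_left h0
  rw [← h1, ZMod.val_cast_of_lt (by omega)]

lemma CycleIn.nezero {n : ℕ} (C : G.CycleIn n) : NeZero n := by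
  rcases Nat.eq_zero_or_pos n with rfl | h
  · exfalso
    haveI : Infinite (ZMod 0) := (inferInstance : Infinite ℤ)
    obtain ⟨x, y, hxy, h⟩ := Finite.exists_ne_map_eq_of_infinite C.vtx
    exact hxy (C.vtx_inj h)
  · exact ⟨h.ne'⟩

/-- Walking around the cycle avoiding edge `i₀`. -/
lemma cycle_rch {n : ℕ} (C : G.CycleIn n) (i₀ : ZMod n) (S : Finset G.E)
    (hS : ∀ t, t ≠ i₀ → C.edge t ∈ S) : G.Rch S (C.vtx (i₀ + 1)) (C.vtx i₀) := by
  haveI := C.nezero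
  have npos : 0 < n := Nat.pos_of_ne_zero (NeZero.ne n)
  have aux : ∀ k : ℕ, k + 1 ≤ n → G.Rch S (C.vtx (i₀ + 1)) (C.vtx (i₀ + ((k + 1 : ℕ) : ZMod n))) := by
    intro k
    induction k with
    | zero => intro _; simpa using rch_refl S (C.vtx (i₀ + 1))
    | succ k ih =>
      intro hk
      have hn2 : 2 ≤ n := by omega
      have hprev := ih (by omega)
      have hone : ((1 : ZMod n)) ≠ 0 := by
        intro h
        have := congrArg ZMod.val h
        rw [show ((1 : ZMod n)) = ((1 : ℕ) : ZMod n) by push_cast; rfl] at this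
        rw [ZMod.val_cast_of_lt (by omega), ZMod.val_zero] at this
        omega
      set t : ZMod n := i₀ + ((k + 1 : ℕ) : ZMod n) with ht
      have htne : t ≠ i₀ := by
        intro h
        have : ((k + 1 : ℕ) : ZMod n) = 0 := by
          have := congrArg (fun z => z - i₀) h
          simpa [ht] using this
        have := congrArg ZMod.val this
        rw [ZMod.val_cast_of_lt (by omega), ZMod.val_zero] at this
        omega
      have hstep : (G.spanning (↑S : Set G.E)).toSimpleGraph.Adj (C.vtx t) (C.vtx (t + 1)) := by
        refine ⟨fun h => ?_, ⟨C.edge t, by simpa using hS t htne⟩, C.ends_eq t⟩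
        have h2 := C.vtx_inj h
        have h01 : (0 : ZMod n) = 1 := by
          simpa using congrArg (fun z => z - t) h2
        exact hone h01.symm
      have : t + 1 = i₀ + ((k + 1 + 1 : ℕ) : ZMod n) := by
        rw [ht]; push_cast; ring
      exact SimpleGraph.Reachable.trans hprev (this ▸ hstep.reachable)
  have := aux (n - 1) (by omega)
  have hcast : ((n - 1 + 1 : ℕ) : ZMod n) = 0 := by
    rw [(by omega : n - 1 + 1 = n), ZMod.natCast_self]
  rw [hcast, add_zero] at this
  exact this

/-- A set of vertices closed under the edges of `S` blocks reachability. -/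
lemma not_rch_of_cut (S : Finset G.E) (A : Set G.V)
    (hA : ∀ f ∈ S, ∀ x y : G.V, G.ends f = s(x, y) → x ∈ A → y ∈ A)
    {a b : G.V} (ha : a ∈ A) (hb : b ∉ A) : ¬ G.Rch S a b := by
  intro h
  have key : ∀ (x y : G.V) (w : (G.spanning (↑S : Set G.E)).toSimpleGraph.Walk x y),
      x ∈ A → y ∈ A := by
    intro x y w
    induction w with
    | nil => exact id
    | cons hadj _ ih =>
      intro hx
      obtain ⟨hne, f, hf⟩ := hadj
      exact ih (hA f.1 (by simpa using f.2) _ _ hf hx)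
  obtain ⟨w⟩ := h
  exact hb (key a b w ha)

end Multigraph
namespace Multigraph

variable {G : Multigraph}

lemma cN_cycle (c : G.E → Bool) {n : ℕ} (C : G.CycleIn n) (i₀ j₀ : ZMod n)
    (hi : c (C.edge i₀) = false) (hj : c (C.edge j₀) = true) :
    G.cN (Finset.univ.filter fun e => c e = true) +
      G.cN (Finset.univ.filter fun e => c e = false) + 1 ≤
      G.numV + G.cN Finset.univ := by
  haveI := C.nezero
  have npos : 0 < n := Nat.pos_of_ne_zero (NeZero.ne n)
  have hij : i₀ ≠ j₀ := fun h => by rw [h, hj] at hi; exact Bool.noConfusion hi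
  have hn2 : 2 ≤ n := by
    by_contra h
    have hn1 : n = 1 := by omega
    subst hn1
    exact hij (Subsingleton.elim _ _)
  set Bt : Finset G.E := Finset.univ.filter (fun e => c e = true) with hBt
  set Wt : Finset G.E := Finset.univ.filter (fun e => c e = false) with hWt
  set e : G.E := C.edge i₀ with he
  set u : G.V := C.vtx i₀ with hu
  set v : G.V := C.vtx (i₀ + 1) with hv
  have hends : G.ends e = s(u, v) := C.ends_eq i₀
  set W₀ : Finset G.E := Wt.filter (fun f => ∃ t, t ≠ i₀ ∧ f = C.edge t) with hW₀
  have heW₀ : e ∉ W₀ := by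
    intro hmem
    rw [hW₀, Finset.mem_filter] at hmem
    obtain ⟨-, t, ht, hte⟩ := hmem
    exact ht (C.edge_inj hte.symm)
  have heWt : e ∈ Wt := by rw [hWt]; simp [hi]
  have hW₀Wt : W₀ ⊆ Wt := Finset.filter_subset _ _
  have hins : insert e W₀ ⊆ Wt := by
    intro f hf
    rcases Finset.mem_insert.mp hf with rfl | hf
    · exact heWt
    · exact hW₀Wt hf
  -- (1) reachability of v and u through Bt ∪ W₀
  have h1 : G.Rch (Bt ∪ W₀) v u := by
    refine cycle_rch C i₀ _ (fun t ht => ?_)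
    rcases Bool.eq_false_or_eq_true (c (C.edge t)) with hc | hc
    · exact Finset.mem_union_left _ (by simp [hBt, hc])
    · refine Finset.mem_union_right _ ?_
      rw [hW₀, Finset.mem_filter]
      exact ⟨by simp [hWt, hc], t, ht, rfl⟩
  -- (2) not reachable through W₀
  set b₀ : ZMod n := j₀ - (i₀ + 1) with hb₀
  set d : ℕ := b₀.val with hd
  have hb₀j : i₀ + 1 + b₀ = j₀ := by rw [hb₀]; ring
  have hedgeb : C.edge (i₀ + 1 + b₀) = C.edge j₀ := by rw [hb₀j]
  have hdn : d ≤ n - 2 := by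
    have hlt : d < n := ZMod.val_lt b₀
    have hne : d ≠ n - 1 := by
      intro hdd
      apply hij
      have hb : b₀ = -1 := by
        have : ((d : ℕ) : ZMod n) = b₀ := zmod_natCast_val b₀
        rw [hdd] at this
        rw [← this]
        have h0 : ((n - 1 : ℕ) : ZMod n) + 1 = 0 := by
          have h2 : (((n - 1) + 1 : ℕ) : ZMod n) = 0 := by
            rw [(by omega : n - 1 + 1 = n), ZMod.natCast_self]
          push_cast at h2
          exact h2
        exact eq_neg_of_add_eq_zero_left h0
      have : j₀ - (i₀ + 1) = -1 := hb₀ ▸ hb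
      have := congrArg (fun z => z + (i₀ + 1)) this
      simpa using this.symm
    omega
  set A : Set G.V := {x | ∃ t : ZMod n, t.val ≤ d ∧ x = C.vtx (i₀ + 1 + t)} with hA
  have hvA : v ∈ A := ⟨0, by simp [ZMod.val_zero], by rw [hv, add_zero]⟩
  have huA : u ∉ A := by
    rintro ⟨t, htd, hteq⟩
    have : i₀ = i₀ + 1 + t := C.vtx_inj hteq
    have ht1 : t = -1 := by linear_combination -this
    rw [ht1, zmod_neg_one_val hn2] at htd
    omega
  have hclosed : ∀ f ∈ W₀, ∀ x y : G.V, G.ends f = s(x, y) → x ∈ A → y ∈ A := by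
    intro f hf x y hfxy hxA
    rw [hW₀, Finset.mem_filter] at hf
    obtain ⟨hfWt, t', ht', rfl⟩ := hf
    have hcf : c (C.edge t') = false := by
      rw [hWt, Finset.mem_filter] at hfWt; exact hfWt.2
    set t : ZMod n := t' - (i₀ + 1) with hts
    have ht'eq : t' = i₀ + 1 + t := by rw [hts]; ring
    have htne1 : t ≠ -1 := by
      intro h
      apply ht'
      rw [ht'eq, h]; ring
    have htb₀ : t ≠ b₀ := by
      intro h
      rw [ht'eq, h, hedgeb, hj] at hcf
      exact Bool.noConfusion hcf
    have hval1 : t.val ≠ n - 1 := by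
      intro h
      apply htne1
      have : ((t.val : ℕ) : ZMod n) = t := zmod_natCast_val t
      rw [h] at this
      rw [← this]
      have h0 : ((n - 1 : ℕ) : ZMod n) + 1 = 0 := by
        have h2 : (((n - 1) + 1 : ℕ) : ZMod n) = 0 := by
          rw [(by omega : n - 1 + 1 = n), ZMod.natCast_self]
        push_cast at h2
        exact h2
      exact eq_neg_of_add_eq_zero_left h0
    have hends' : G.ends (C.edge t') = s(C.vtx (i₀ + 1 + t), C.vtx (i₀ + 1 + (t + 1))) := by
      rw [C.ends_eq t', ht'eq]
      congr 1
      ring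
    rw [hends', Sym2.eq_iff] at hfxy
    rcases hfxy with ⟨hx, hy⟩ | ⟨hx, hy⟩
    · -- x = vtx (i₀+1+t), y = vtx (i₀+1+(t+1))
      obtain ⟨t₂, ht₂d, ht₂⟩ := hxA
      have heq12 : i₀ + 1 + t = i₀ + 1 + t₂ := C.vtx_inj (hx.trans ht₂)
      have htt : t = t₂ := by linear_combination heq12
      have htd : t.val ≤ d := htt ▸ ht₂d
      have htdlt : t.val < d := by
        rcases lt_or_eq_of_le htd with h | h
        · exact h
        · exact absurd (zmod_val_eq_iff.mp (h.trans hd)) htb₀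
      have hval : (t + 1).val = t.val + 1 := zmod_val_add_one (by omega)
      exact ⟨t + 1, by omega, hy.symm⟩
    · -- x = vtx (i₀+1+(t+1)), y = vtx (i₀+1+t)
      obtain ⟨t₂, ht₂d, ht₂⟩ := hxA
      have heq12 : i₀ + 1 + (t + 1) = i₀ + 1 + t₂ := C.vtx_inj (hy.trans ht₂)
      have htt : t + 1 = t₂ := by linear_combination heq12
      have hval : (t + 1).val = t.val + 1 := by
        refine zmod_val_add_one ?_
        have := ZMod.val_lt t
        omega
      have htd : t.val ≤ d := by
        have : (t + 1).val ≤ d := htt ▸ ht₂d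
        omega
      exact ⟨t, htd, hx.symm⟩
  have h2 : ¬ G.Rch W₀ v u := not_rch_of_cut W₀ A hclosed hvA huA
  -- arithmetic assembly
  have h3 : G.cN (insert e W₀) + 1 = G.cN W₀ :=
    cN_insert_of_not_rch hends (fun h => h2 (SimpleGraph.Reachable.symm h))
  have h4 : G.cN (insert e (Bt ∪ W₀)) = G.cN (Bt ∪ W₀) :=
    cN_insert_of_rch hends (SimpleGraph.Reachable.symm h1)
  have hBtW0 : Bt ∪ insert e W₀ = insert e (Bt ∪ W₀) := by
    ext x
    simp only [Finset.mem_union, Finset.mem_insert]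
    tauto
  have hWtsplit : insert e W₀ ∪ (Wt \ insert e W₀) = Wt :=
    Finset.union_sdiff_of_subset hins
  have huniv : Bt ∪ Wt = Finset.univ := by
    ext x
    simp only [hBt, hWt, Finset.mem_union, Finset.mem_filter, Finset.mem_univ, true_and,
      iff_true]
    cases c x
    · right; rfl
    · left; rfl
  have h5 := cN_Dmono Bt (insert e W₀) (Wt \ insert e W₀)
  rw [hWtsplit, hBtW0, h4] at h5
  have hassoc : insert e (Bt ∪ W₀) ∪ (Wt \ insert e W₀) = Finset.univ := by
    rw [← hBtW0, Finset.union_assoc, hWtsplit, huniv]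
  rw [hassoc] at h5
  have h6 := cN_add_le Bt W₀
  omega

end Multigraph
namespace Multigraph

variable {G : Multigraph}

lemma getVert_inj_of_isPath {V : Type} {H : SimpleGraph V} {u v : V} (p : H.Walk u v)
    (hp : p.IsPath) :
    ∀ i j, i ≤ p.length → j ≤ p.length → p.getVert i = p.getVert j → i = j := by
  induction p with
  | nil => intro i j hi hj _; simp at hi hj; omega
  | @cons a b w hadj q ih =>
    rw [SimpleGraph.Walk.cons_isPath_iff] at hp
    intro i j hi hj hij
    simp only [SimpleGraph.Walk.length_cons] at hi hj
    match i, j with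
    | 0, 0 => rfl
    | 0, (k + 1) =>
      exfalso
      rw [SimpleGraph.Walk.getVert_zero, SimpleGraph.Walk.getVert_cons_succ] at hij
      exact hp.2 (SimpleGraph.Walk.mem_support_iff_exists_getVert.mpr
        ⟨k, hij.symm, by omega⟩)
    | (k + 1), 0 =>
      exfalso
      rw [SimpleGraph.Walk.getVert_zero, SimpleGraph.Walk.getVert_cons_succ] at hij
      exact hp.2 (SimpleGraph.Walk.mem_support_iff_exists_getVert.mpr
        ⟨k, hij, by omega⟩)
    | (k + 1), (l + 1) =>
      rw [SimpleGraph.Walk.getVert_cons_succ, SimpleGraph.Walk.getVert_cons_succ] at hij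
      have := ih hp.1 k l (by omega) (by omega) hij
      omega

lemma rch_filter_of_monochromatic {c : G.E → Bool} (hM : G.MonochromaticCycles c)
    (S : Finset G.E) (e : G.E) (he : e ∉ S) {u v : G.V} (hends : G.ends e = s(u, v))
    (huv : u ≠ v) (h : G.Rch S u v) : G.Rch (S.filter fun f => c f = c e) u v := by
  obtain ⟨w⟩ := h
  set p := w.bypass with hpdef
  have hp : p.IsPath := w.bypass_isPath
  have hinj := getVert_inj_of_isPath p hp
  have hlen : 1 ≤ p.length := by
    by_contra hl
    have h0 : p.length = 0 := by omega
    exact huv (SimpleGraph.Walk.eq_of_length_eq_zero h0)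
  have hadj : ∀ k, k < p.length →
      ∃ f : G.E, f ∈ S ∧ G.ends f = s(p.getVert k, p.getVert (k + 1)) := by
    intro k hk
    obtain ⟨hne, f, hf⟩ := p.adj_getVert_succ hk
    exact ⟨f.1, by simpa using f.2, hf⟩
  choose F hFS hFe using hadj
  set N := p.length + 1 with hN
  haveI : NeZero N := ⟨by omega⟩
  have hvallt : ∀ i : ZMod N, i.val < N := fun i => ZMod.val_lt i
  set vtx : ZMod N → G.V := fun i => p.getVert i.val with hvtx
  set edge : ZMod N → G.E := fun i =>
    if h : i.val < p.length then F i.val h else e with hedge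
  have hedge_last : ∀ i : ZMod N, i.val = p.length → edge i = e := by
    intro i hi
    have hnot : ¬ i.val < p.length := by omega
    simp [hedge, hnot]
  have hedge_lt : ∀ (i : ZMod N) (h : i.val < p.length), edge i = F i.val h := by
    intro i hi
    rw [hedge]
    simp only [dif_pos hi]
  have hvtx_inj : Function.Injective vtx := by
    intro i j hij
    apply zmod_val_eq_iff.mp
    exact hinj i.val j.val (by have := hvallt i; omega) (by have := hvallt j; omega) hij
  have hplus : ∀ i : ZMod N, i.val < p.length → (i + 1).val = i.val + 1 := by
    intro i hi
    exact zmod_val_add_one (by omega)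
  have hwrap : ∀ i : ZMod N, i.val = p.length → i + 1 = 0 := by
    intro i hi
    have : i = ((p.length : ℕ) : ZMod N) := by
      rw [← zmod_natCast_val i, hi]
    rw [this, ← Nat.cast_one, ← Nat.cast_add, hN, ZMod.natCast_self]
  have hends_eq : ∀ i : ZMod N, G.ends (edge i) = s(vtx i, vtx (i + 1)) := by
    intro i
    by_cases hi : i.val < p.length
    · rw [hedge_lt i hi, hFe i.val hi, hvtx]
      simp only []
      rw [hplus i hi]
      rfl
    · have hi' : i.val = p.length := by have := hvallt i; omega
      rw [hedge_last i hi', hends]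
      have h1 : vtx i = v := by
        rw [hvtx]; simp only []; rw [hi']; exact SimpleGraph.Walk.getVert_length p
      have h2 : vtx (i + 1) = u := by
        rw [hwrap i hi', hvtx]; simp only []
        rw [ZMod.val_zero]; exact SimpleGraph.Walk.getVert_zero p
      rw [h1, h2, Sym2.eq_swap]
  have hedge_inj : Function.Injective edge := by
    intro i j hij
    by_cases hi : i.val < p.length <;> by_cases hj : j.val < p.length
    · rw [hedge_lt i hi, hedge_lt j hj] at hij
      have hei := hFe i.val hi
      have hej := hFe j.val hj
      rw [hij] at hei
      rw [hej] at hei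
      replace hei := Sym2.eq_iff.mp hei
      apply zmod_val_eq_iff.mp
      rcases hei with ⟨h1, h2⟩ | ⟨h1, h2⟩
      · exact (hinj j.val i.val (by omega) (by omega) h1).symm
      · have e1 := hinj j.val (i.val + 1) (by omega) (by omega) h1
        have e2 := hinj (j.val + 1) i.val (by omega) (by omega) h2
        omega
    · have hj' : j.val = p.length := by have := hvallt j; omega
      rw [hedge_lt i hi, hedge_last j hj'] at hij
      exact absurd (hij ▸ hFS i.val hi) he
    · have hi' : i.val = p.length := by have := hvallt i; omega
      rw [hedge_last i hi', hedge_lt j hj] at hij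
      exact absurd (hij ▸ hFS j.val hj) he
    · have hi' : i.val = p.length := by have := hvallt i; omega
      have hj' : j.val = p.length := by have := hvallt j; omega
      exact zmod_val_eq_iff.mp (hi'.trans hj'.symm)
  have hmono : ∀ k (hk : k < p.length), c (F k hk) = c e := by
    intro k hk
    have hkval : ((k : ℕ) : ZMod N).val = k := ZMod.val_cast_of_lt (by omega)
    have hlval : ((p.length : ℕ) : ZMod N).val = p.length := ZMod.val_cast_of_lt (by omega)
    have hkl : ((k : ℕ) : ZMod N).val < p.length := by rw [hkval]; exact hk
    have hcyc : c (edge ((k : ℕ) : ZMod N)) = c (edge ((p.length : ℕ) : ZMod N)) :=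
      hM N ⟨vtx, edge, hvtx_inj, hedge_inj, hends_eq⟩ _ _
    rw [hedge_last _ hlval, hedge_lt _ hkl] at hcyc
    have hgen : ∀ (hh : ((k : ℕ) : ZMod N).val < p.length),
        c (F ((k : ℕ) : ZMod N).val hh) = c e → c (F k hk) = c e := by
      rw [hkval]
      intro hh hcc
      exact hcc
    exact hgen hkl hcyc
  -- now build reachability in the filtered edge set
  have hreach : ∀ k, k ≤ p.length →
      G.Rch (S.filter fun f => c f = c e) u (p.getVert k) := by
    intro k
    induction k with
    | zero => intro _; rw [(SimpleGraph.Walk.getVert_zero p : p.getVert 0 = u)]; exact rch_refl _ u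
    | succ k ih =>
      intro hk
      have hk' : k < p.length := by omega
      refine SimpleGraph.Reachable.trans (ih (by omega)) ?_
      refine SimpleGraph.Adj.reachable ?_
      refine ⟨fun hh => ?_, ⟨F k hk', ?_⟩, hFe k hk'⟩
      · have := hinj k (k + 1) (by omega) (by omega) hh
        omega
      · simp only [Finset.coe_filter, Set.mem_setOf_eq, Finset.mem_filter]
        exact ⟨Finset.mem_coe.mpr (hFS k hk'), hmono k hk'⟩
  have := hreach p.length (le_refl _)
  rw [(SimpleGraph.Walk.getVert_length p : p.getVert p.length = v)] at this
  exact this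

end Multigraph
namespace Multigraph

variable {G : Multigraph}

lemma cN_eq_of_monochromatic {c : G.E → Bool} (hM : G.MonochromaticCycles c) (S : Finset G.E) :
    G.cN (S.filter fun f => c f = true) + G.cN (S.filter fun f => c f = false) =
      G.numV + G.cN S := by
  induction S using Finset.induction_on with
  | empty => simp [cN_empty]
  | @insert e S he ih =>
    obtain ⟨u, v, hends⟩ := exists_ends e
    cases hce : c e
    · -- c e = false
      have hft : (insert e S).filter (fun f => c f = true) = S.filter fun f => c f = true := by
        rw [Finset.filter_insert, if_neg (by simp [hce])]
      have hff : (insert e S).filter (fun f => c f = false)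
          = insert e (S.filter fun f => c f = false) := by
        rw [Finset.filter_insert, if_pos hce]
      rw [hft, hff]
      by_cases hr : G.Rch (S.filter fun f => c f = false) u v
      · rw [cN_insert_of_rch hends hr,
          cN_insert_of_rch hends (rch_mono (Finset.filter_subset _ _) hr)]
        exact ih
      · by_cases hr2 : G.Rch S u v
        · exfalso
          have huv : u ≠ v := fun h => hr (h ▸ rch_refl _ u)
          have hx := rch_filter_of_monochromatic hM S e he hends huv hr2
          rw [hce] at hx
          exact hr hx
        · have h1 := cN_insert_of_not_rch hends hr
          have h2 := cN_insert_of_not_rch hends hr2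
          omega
    · -- c e = true
      have hff : (insert e S).filter (fun f => c f = false) = S.filter fun f => c f = false := by
        rw [Finset.filter_insert, if_neg (by simp [hce])]
      have hft : (insert e S).filter (fun f => c f = true)
          = insert e (S.filter fun f => c f = true) := by
        rw [Finset.filter_insert, if_pos hce]
      rw [hft, hff]
      by_cases hr : G.Rch (S.filter fun f => c f = true) u v
      · rw [cN_insert_of_rch hends hr,
          cN_insert_of_rch hends (rch_mono (Finset.filter_subset _ _) hr)]
        exact ih
      · by_cases hr2 : G.Rch S u v
        · exfalso
          have huv : u ≠ v := fun h => hr (h ▸ rch_refl _ u)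
          have hx := rch_filter_of_monochromatic hM S e he hends huv hr2
          rw [hce] at hx
          exact hr hx
        · have h1 := cN_insert_of_not_rch hends hr
          have h2 := cN_insert_of_not_rch hends hr2
          omega

lemma cN_univ_eq_p0 : G.cN (Finset.univ : Finset G.E) = G.p0 := by
  have hgr : (G.spanning (↑(Finset.univ : Finset G.E) : Set G.E)).toSimpleGraph
      = G.toSimpleGraph := by
    ext x y
    constructor
    · rintro ⟨hne, f, hf⟩
      exact ⟨hne, f.1, hf⟩
    · rintro ⟨hne, f, hf⟩
      exact ⟨hne, ⟨f, by simp⟩, hf⟩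
  unfold cN p0
  rw [hgr]; rfl

lemma numE_spanning_coe (S : Finset G.E) :
    (G.spanning (↑S : Set G.E)).numE = S.card := by
  rw [numE, ← Nat.card_eq_fintype_card]
  exact Nat.card_eq_finsetCard S

lemma numV_spanning (A : Set G.E) : (G.spanning A).numV = G.numV := by
  rw [numV, numV]
  exact Fintype.card_congr' rfl

end Multigraph

namespace Multigraph

/-- For a connected 2-colored graph (edge coloring `c`, with `true` = black and
`false` = white), `p0(G_b) + p1(G_b) + p0(G_w) + p1(G_w) ≤ |E(G)| + 2`, with
equality iff `G` has no 2-colored cycle. -/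
theorem two_color_p0_p1_bound (G : Multigraph) (hG : G.Connected) (c : G.E → Bool) :
    ((G.spanning {e | c e = true}).p0 + (G.spanning {e | c e = true}).p1 +
        (G.spanning {e | c e = false}).p0 + (G.spanning {e | c e = false}).p1 ≤
      G.numE + 2) ∧
    ((G.spanning {e | c e = true}).p0 + (G.spanning {e | c e = true}).p1 +
        (G.spanning {e | c e = false}).p0 + (G.spanning {e | c e = false}).p1 =
        G.numE + 2 ↔ G.MonochromaticCycles c) := by
  set Bfin : Finset G.E := Finset.univ.filter (fun e => c e = true) with hBfin
  set Wfin : Finset G.E := Finset.univ.filter (fun e => c e = false) with hWfin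
  have hBset : {e : G.E | c e = true} = (↑Bfin : Set G.E) := by
    ext x; simp [hBfin]
  have hWset : {e : G.E | c e = false} = (↑Wfin : Set G.E) := by
    ext x; simp [hWfin]
  rw [hBset, hWset]
  have hp0B : (G.spanning (↑Bfin : Set G.E)).p0 = G.cN Bfin := rfl
  have hp0W : (G.spanning (↑Wfin : Set G.E)).p0 = G.cN Wfin := rfl
  have hp1B : (G.spanning (↑Bfin : Set G.E)).p1 = Bfin.card + G.cN Bfin - G.numV := by
    rw [p1, numE_spanning_coe, numV_spanning, hp0B]
  have hp1W : (G.spanning (↑Wfin : Set G.E)).p1 = Wfin.card + G.cN Wfin - G.numV := by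
    rw [p1, numE_spanning_coe, numV_spanning, hp0W]
  have hBW : Bfin.card + Wfin.card = G.numE := by
    rw [numE, hBfin, hWfin]
    have : Finset.univ.filter (fun e : G.E => c e = false)
        = Finset.univ.filter (fun e : G.E => ¬ c e = true) := by
      ext x; simp
    rw [this, Finset.card_filter_add_card_filter_not, Finset.card_univ]
  have huniv : Bfin ∪ Wfin = (Finset.univ : Finset G.E) := by
    ext x
    simp only [hBfin, hWfin, Finset.mem_union, Finset.mem_filter, Finset.mem_univ, true_and,
      iff_true]
    cases c x
    · right; rfl
    · left; rfl
  have hconn : G.cN (Finset.univ : Finset G.E) = 1 := by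
    rw [cN_univ_eq_p0]; exact hG
  have hineq : G.cN Bfin + G.cN Wfin ≤ G.numV + 1 := by
    have := cN_add_le (G := G) Bfin Wfin
    rw [huniv, hconn] at this
    exact this
  have hlbB : G.numV ≤ Bfin.card + G.cN Bfin := numV_le_card_add_cN Bfin
  have hlbW : G.numV ≤ Wfin.card + G.cN Wfin := numV_le_card_add_cN Wfin
  rw [hp0B, hp0W, hp1B, hp1W]
  constructor
  · omega
  · constructor
    · intro heq
      by_contra hmono
      unfold MonochromaticCycles at hmono
      push_neg at hmono
      obtain ⟨n, C, i, j, hne⟩ := hmono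
      have hstrict : G.cN Bfin + G.cN Wfin + 1 ≤ G.numV + G.cN Finset.univ := by
        by_cases hci : c (C.edge i) = false
        · have hcj : c (C.edge j) = true := by
            cases hcj : c (C.edge j)
            · exact absurd (hci.trans hcj.symm) hne
            · rfl
          exact cN_cycle c C i j hci hcj
        · have hci' : c (C.edge i) = true := by
            cases h : c (C.edge i)
            · exact absurd h hci
            · rfl
          have hcj : c (C.edge j) = false := by
            cases h : c (C.edge j)
            · rfl
            · exact absurd (hci'.trans h.symm) hne
          exact cN_cycle c C j i hcj hci'
      rw [hconn] at hstrict
      omega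
    · intro hM
      have := cN_eq_of_monochromatic hM (Finset.univ : Finset G.E)
      rw [hconn, ← hBfin, ← hWfin] at this
      omega


end Multigraph
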